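/- arXiv:cs/0510021 — 4 statements merged into one kernel-verified Lean document; each statement's English description precedes it below -/
import Mathlib

section
/- For any α > 0, any finite nonnegative SNR vector Γ ∈ ℝ_{≥0}^K, there exists a unique η ∈ (0,1] satisfying the MMSE fixed-point equation 1/η = 1 + (α/K)·Σ_{k=1}^K Γ_k/(1 + η·Γ_k). -/
/-- Existence and uniqueness of the MMSE multiuser efficiency: there is a unique
η ∈ (0,1] with 1/η = 1 + (α/K)·Σ_k Γ_k/(1 + η·Γ_k). -/
theorem mmse_efficiency_exists_unique (K : ℕ) (hK : 0 < K) (α : ℝ) (hα : 0 < α)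
    (Γ : Fin K → ℝ) (hΓ : ∀ k, 0 ≤ Γ k) :
    ∃! η : ℝ, η ∈ Set.Ioc (0 : ℝ) 1 ∧
      1 / η = 1 + (α / (K : ℝ)) * ∑ k, Γ k / (1 + η * Γ k) := by
  set F : ℝ → ℝ := fun η => η + (α / K) * ∑ k, η * Γ k / (1 + η * Γ k) with hF
  have hden : ∀ η : ℝ, 0 ≤ η → ∀ k, 0 < 1 + η * Γ k := by
    intro η hη k
    have := mul_nonneg hη (hΓ k)
    linarith
  have hαK : 0 < α / K := div_pos hα (by exact_mod_cast hK)
  have hmono : StrictMonoOn F (Set.Icc (0:ℝ) 1) := by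
    intro a ha b hb hab
    have hsum : ∑ k, a * Γ k / (1 + a * Γ k) ≤ ∑ k, b * Γ k / (1 + b * Γ k) := by
      apply Finset.sum_le_sum
      intro k _
      have h1 := hden a ha.1 k
      have h2 := hden b hb.1 k
      rw [div_le_div_iff₀ h1 h2]
      nlinarith [hΓ k, ha.1, hab.le]
    have := mul_le_mul_of_nonneg_left hsum hαK.le
    simp only [hF]
    linarith
  have hcont : ContinuousOn F (Set.Icc (0:ℝ) 1) := by
    apply ContinuousOn.add continuousOn_id
    apply ContinuousOn.mul continuousOn_const
    apply continuousOn_finset_sum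
    intro k _
    exact (continuousOn_id.mul continuousOn_const).div
      (continuousOn_const.add (continuousOn_id.mul continuousOn_const))
      (fun η hη => (hden η hη.1 k).ne')
  have hF0 : F 0 = 0 := by simp [hF]
  have hF1 : 1 ≤ F 1 := by
    have h : 0 ≤ ∑ k, 1 * Γ k / (1 + 1 * Γ k) := by
      apply Finset.sum_nonneg
      intro k _
      exact div_nonneg (by simpa using hΓ k) (hden 1 zero_le_one k).le
    have := mul_nonneg hαK.le h
    simp only [hF]
    linarith
  have hIVT : (1:ℝ) ∈ Set.Icc (F 0) (F 1) := ⟨by rw [hF0]; norm_num, hF1⟩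
  obtain ⟨η, hηmem, hηeq⟩ := intermediate_value_Icc (by norm_num : (0:ℝ) ≤ 1) hcont hIVT
  have hη0 : 0 < η := by
    rcases eq_or_lt_of_le hηmem.1 with h | h
    · exfalso; rw [← h, hF0] at hηeq; norm_num at hηeq
    · exact h
  have key : ∀ x ∈ Set.Ioc (0:ℝ) 1,
      (1 / x = 1 + (α / K) * ∑ k, Γ k / (1 + x * Γ k)) ↔ F x = 1 := by
    intro x hx
    have hx0 : 0 < x := hx.1
    have hsum : x * ∑ k, Γ k / (1 + x * Γ k) = ∑ k, x * Γ k / (1 + x * Γ k) := by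
      rw [Finset.mul_sum]
      exact Finset.sum_congr rfl fun k _ => (mul_div_assoc x (Γ k) _).symm
    have hEq : (1 + (α / K) * ∑ k, Γ k / (1 + x * Γ k)) * x = F x := by
      simp only [hF]
      rw [show (1 + (α / K) * ∑ k, Γ k / (1 + x * Γ k)) * x
          = x + (α / K) * (x * ∑ k, Γ k / (1 + x * Γ k)) by ring, hsum]
    rw [div_eq_iff hx0.ne', hEq]
    exact eq_comm
  refine ⟨η, ⟨⟨hη0, hηmem.2⟩, (key η ⟨hη0, hηmem.2⟩).mpr hηeq⟩, ?_⟩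
  intro y ⟨hy, hyeq⟩
  have hyF : F y = 1 := (key y hy).mp hyeq
  exact hmono.injOn ⟨hy.1.le, hy.2⟩ ⟨hη0.le, hηmem.2⟩ (by rw [hyF, hηeq])
end

section
/- The MMSE inverse efficiency is scalable: for any θ > 1 and Γ ∈ ℝ_{≥0}^K with not all components relevant trivially, θ/η(Γ) > 1/η(θ·Γ), where η(·) denotes the unique solution in (0,1] of the MMSE fixed-point equation. Equivalently, θ·η(θΓ) > η(Γ). -/
/-- The MMSE inverse efficiency is scalable: for θ > 1, θ/η(Γ) > 1/η(θΓ),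
equivalently θ·η(θΓ) > η(Γ), where η(Γ) and η(θΓ) are the unique solutions in
(0,1] of the MMSE fixed-point equation for the SNR vectors Γ and θΓ. -/
theorem mmse_inverse_efficiency_scalable (K : ℕ) (hK : 0 < K) (α : ℝ) (hα : 0 < α)
    (Γ : Fin K → ℝ) (hΓ : ∀ k, 0 ≤ Γ k) (θ : ℝ) (hθ : 1 < θ)
    (η η' : ℝ) (hη : η ∈ Set.Ioc (0 : ℝ) 1) (hη' : η' ∈ Set.Ioc (0 : ℝ) 1)
    (heq : η + (α / (K : ℝ)) * ∑ k, η * Γ k / (1 + η * Γ k) = 1)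
    (heq' : η' + (α / (K : ℝ)) * ∑ k, η' * (θ * Γ k) / (1 + η' * (θ * Γ k)) = 1) :
    η < θ * η' ∧ 1 / η' < θ / η := by
  obtain ⟨hη0, hη1⟩ := hη
  obtain ⟨hη'0, hη'1⟩ := hη'
  have hKpos : (0:ℝ) < K := by exact_mod_cast hK
  have hsum : ∑ k, θ * η' * Γ k / (1 + θ * η' * Γ k)
      = ∑ k, η' * (θ * Γ k) / (1 + η' * (θ * Γ k)) := by
    apply Finset.sum_congr rfl
    intro k _
    ring_nf
  have key : η < θ * η' := by
    by_contra h
    push_neg at h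
    have hmono : ∀ k, θ * η' * Γ k / (1 + θ * η' * Γ k) ≤ η * Γ k / (1 + η * Γ k) := by
      intro k
      have hg := hΓ k
      have hθ0 : 0 < θ := by linarith
      have ha : 0 ≤ θ * η' * Γ k := by positivity
      have hb : 0 ≤ η * Γ k := mul_nonneg hη0.le hg
      have hab : θ * η' * Γ k ≤ η * Γ k := mul_le_mul_of_nonneg_right h hg
      have h1 : 0 < 1 + θ * η' * Γ k := by linarith
      have h2 : 0 < 1 + η * Γ k := by linarith
      rw [div_le_div_iff₀ h1 h2]
      nlinarith
    have hs : ∑ k, θ * η' * Γ k / (1 + θ * η' * Γ k) ≤ ∑ k, η * Γ k / (1 + η * Γ k) :=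
      Finset.sum_le_sum (fun k _ => hmono k)
    have hc : 0 ≤ α / (K:ℝ) := by positivity
    have hF : θ * η' + (α / (K:ℝ)) * ∑ k, θ * η' * Γ k / (1 + θ * η' * Γ k) ≤ 1 := by
      nlinarith [mul_le_mul_of_nonneg_left hs hc]
    rw [hsum] at hF
    nlinarith
  refine ⟨key, ?_⟩
  rw [div_lt_div_iff₀ hη'0 hη0]
  linarith
end

section
/- For a function I: ℝ_{≥0}^K → ℝ^K satisfying positivity (I(Γ) > 0 componentwise), monotonicity (Γ' ≥ Γ implies I(Γ') ≥ I(Γ)), and scalability (θ > 1 implies θ·I(Γ) > I(θ·Γ) componentwise), if a fixed point Γ* = I(Γ*) exists, it is unique. -/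
/-- One-sided comparison for fixed points of a standard interference function. -/
lemma standard_interference_fixed_point_le (K : ℕ)
    (I : (Fin K → ℝ) → (Fin K → ℝ))
    (hpos : ∀ Γ : Fin K → ℝ, (∀ k, 0 ≤ Γ k) → ∀ k, 0 < I Γ k)
    (hmono : ∀ Γ Γ' : Fin K → ℝ, (∀ k, 0 ≤ Γ k) → (∀ k, Γ k ≤ Γ' k) →
      ∀ k, I Γ k ≤ I Γ' k)
    (hscal : ∀ Γ : Fin K → ℝ, (∀ k, 0 ≤ Γ k) → ∀ θ : ℝ, 1 < θ →
      ∀ k, I (fun j => θ * Γ j) k < θ * I Γ k)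
    (Γ₁ Γ₂ : Fin K → ℝ) (h₁ : ∀ k, 0 ≤ Γ₁ k) (h₂ : ∀ k, 0 ≤ Γ₂ k)
    (hfix₁ : I Γ₁ = Γ₁) (hfix₂ : I Γ₂ = Γ₂) :
    ∀ k, Γ₂ k ≤ Γ₁ k := by
  have hΓ₁pos : ∀ k, 0 < Γ₁ k := by
    intro k; rw [← hfix₁]; exact hpos Γ₁ h₁ k
  by_contra h
  push_neg at h
  obtain ⟨k₁, hk₁⟩ := h
  -- take the max ratio θ = max_k Γ₂ k / Γ₁ k
  have hne : (Finset.univ : Finset (Fin K)).Nonempty := ⟨k₁, Finset.mem_univ _⟩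
  obtain ⟨k₀, -, hk₀⟩ := Finset.exists_max_image Finset.univ (fun k => Γ₂ k / Γ₁ k) hne
  set θ := Γ₂ k₀ / Γ₁ k₀ with hθ
  have hθ1 : 1 < θ := by
    have h1 : 1 < Γ₂ k₁ / Γ₁ k₁ := (one_lt_div (hΓ₁pos k₁)).2 hk₁
    exact lt_of_lt_of_le h1 (hk₀ k₁ (Finset.mem_univ _))
  have hle : ∀ j, Γ₂ j ≤ θ * Γ₁ j := by
    intro j
    have := hk₀ j (Finset.mem_univ _)
    calc Γ₂ j = (Γ₂ j / Γ₁ j) * Γ₁ j := by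
            rw [div_mul_cancel₀ _ (ne_of_gt (hΓ₁pos j))]
      _ ≤ θ * Γ₁ j := by
            exact mul_le_mul_of_nonneg_right this (le_of_lt (hΓ₁pos j))
  have key : Γ₂ k₀ < θ * Γ₁ k₀ := by
    calc Γ₂ k₀ = I Γ₂ k₀ := by rw [hfix₂]
      _ ≤ I (fun j => θ * Γ₁ j) k₀ := hmono Γ₂ _ h₂ hle k₀
      _ < θ * I Γ₁ k₀ := hscal Γ₁ h₁ θ hθ1 k₀
      _ = θ * Γ₁ k₀ := by rw [hfix₁]
  have heq : Γ₂ k₀ = θ * Γ₁ k₀ := by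
    rw [hθ, div_mul_cancel₀ _ (ne_of_gt (hΓ₁pos k₀))]
  exact absurd key (by rw [← heq]; exact lt_irrefl _)

/-- A standard interference function (positive, monotone, scalable) has at most
one fixed point: if Γ₁ and Γ₂ are nonnegative fixed points, then Γ₁ = Γ₂. -/
theorem standard_interference_fixed_point_unique (K : ℕ)
    (I : (Fin K → ℝ) → (Fin K → ℝ))
    (hpos : ∀ Γ : Fin K → ℝ, (∀ k, 0 ≤ Γ k) → ∀ k, 0 < I Γ k)
    (hmono : ∀ Γ Γ' : Fin K → ℝ, (∀ k, 0 ≤ Γ k) → (∀ k, Γ k ≤ Γ' k) →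
      ∀ k, I Γ k ≤ I Γ' k)
    (hscal : ∀ Γ : Fin K → ℝ, (∀ k, 0 ≤ Γ k) → ∀ θ : ℝ, 1 < θ →
      ∀ k, I (fun j => θ * Γ j) k < θ * I Γ k)
    (Γ₁ Γ₂ : Fin K → ℝ) (h₁ : ∀ k, 0 ≤ Γ₁ k) (h₂ : ∀ k, 0 ≤ Γ₂ k)
    (hfix₁ : I Γ₁ = Γ₁) (hfix₂ : I Γ₂ = Γ₂) :
    Γ₁ = Γ₂ := by
  funext k
  exact le_antisymm
    (standard_interference_fixed_point_le K I hpos hmono hscal Γ₂ Γ₁ h₂ h₁ hfix₂ hfix₁ k)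
    (standard_interference_fixed_point_le K I hpos hmono hscal Γ₁ Γ₂ h₁ h₂ hfix₁ hfix₂ k)
end

section
/- For a standard interference function I (positive, monotone, scalable), if there exists a feasible vector Γ̂ ≥ I(Γ̂), then the iteration Γ(n+1) = I(Γ(n)) started from Γ(0) = 0 produces a monotonically nondecreasing sequence that is bounded above by Γ̂, and hence converges to a fixed point Γ* ≤ Γ̂. -/
/-- For a continuous standard interference function I, if a feasible vector
Γ̂ ≥ I(Γ̂) exists, then the iteration Γ(n+1) = I(Γ(n)) started from Γ(0) = 0 is
nondecreasing, bounded above by Γ̂, and converges to a fixed point Γ* ≤ Γ̂. -/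
theorem standard_interference_iteration_converges (K : ℕ)
    (I : (Fin K → ℝ) → (Fin K → ℝ)) (hcont : Continuous I)
    (hpos : ∀ Γ : Fin K → ℝ, (∀ k, 0 ≤ Γ k) → ∀ k, 0 < I Γ k)
    (hmono : ∀ Γ Γ' : Fin K → ℝ, (∀ k, 0 ≤ Γ k) → (∀ k, Γ k ≤ Γ' k) →
      ∀ k, I Γ k ≤ I Γ' k)
    (hscal : ∀ Γ : Fin K → ℝ, (∀ k, 0 ≤ Γ k) → ∀ θ : ℝ, 1 < θ →
      ∀ k, I (fun j => θ * Γ j) k < θ * I Γ k)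
    (Γhat : Fin K → ℝ) (hΓhat : ∀ k, 0 ≤ Γhat k) (hfeas : ∀ k, I Γhat k ≤ Γhat k) :
    (∀ n k, I^[n] 0 k ≤ I^[n + 1] 0 k) ∧
    (∀ n k, I^[n] 0 k ≤ Γhat k) ∧
    ∃ Γstar : Fin K → ℝ, I Γstar = Γstar ∧ (∀ k, Γstar k ≤ Γhat k) ∧
      Filter.Tendsto (fun n => I^[n] 0) Filter.atTop (nhds Γstar) := by
  set a : ℕ → Fin K → ℝ := fun n => I^[n] 0 with ha
  have hstep : ∀ n, a (n+1) = I (a n) := fun n => Function.iterate_succ_apply' I n 0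
  have hnn : ∀ n k, 0 ≤ a n k := by
    intro n
    induction n with
    | zero => intro k; simp [ha]
    | succ n ih => intro k; rw [hstep]; exact (hpos _ ih k).le
  have hmono' : ∀ n k, a n k ≤ a (n+1) k := by
    intro n
    induction n with
    | zero => intro k; rw [hstep]; simpa [ha] using (hpos 0 (fun _ => le_refl 0) k).le
    | succ n ih => intro k; rw [hstep, hstep]; exact hmono _ _ (hnn n) ih k
  have hbd : ∀ n k, a n k ≤ Γhat k := by
    intro n; induction n with
    | zero => intro k; simpa [ha] using hΓhat k
    | succ n ih => intro k; rw [hstep]; exact (hmono _ _ (hnn n) ih k).trans (hfeas k)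
  refine ⟨hmono', hbd, ?_⟩
  have hmonoK : ∀ k, Monotone (fun n => a n k) := fun k =>
    monotone_nat_of_le_succ (fun n => hmono' n k)
  have hbddK : ∀ k, BddAbove (Set.range (fun n => a n k)) :=
    fun k => ⟨Γhat k, by rintro x ⟨n, rfl⟩; exact hbd n k⟩
  set Γstar : Fin K → ℝ := fun k => ⨆ n, a n k with hΓstar
  have htend : ∀ k, Filter.Tendsto (fun n => a n k) Filter.atTop (nhds (Γstar k)) :=
    fun k => tendsto_atTop_ciSup (hmonoK k) (hbddK k)
  have htendall : Filter.Tendsto a Filter.atTop (nhds Γstar) :=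
    tendsto_pi_nhds.mpr htend
  have hfix : I Γstar = Γstar := by
    have h1 : Filter.Tendsto (fun n => a (n+1)) Filter.atTop (nhds Γstar) :=
      htendall.comp (Filter.tendsto_add_atTop_nat 1)
    have h2 : Filter.Tendsto (fun n => I (a n)) Filter.atTop (nhds (I Γstar)) :=
      (hcont.tendsto Γstar).comp htendall
    have heq : (fun n => I (a n)) = fun n => a (n+1) := funext fun n => (hstep n).symm
    rw [heq] at h2
    exact tendsto_nhds_unique h2 h1
  exact ⟨Γstar, hfix, fun k => ciSup_le (fun n => hbd n k), htendall⟩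
end
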